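/- Let p be a probability sequence with p_1 < 1 and mean μ(p) = 1, so that the Galton–Watson tree 𝒯 = 𝒯^p is almost surely finite. For a finite ordered rooted tree T with root o, let P(T,x) := Σ_{v∈T} x^{d(v,o)}. For complex z, x, y with |z| < 1 and |x|, |y| ≤ 1, define Φ(z) := Σ_{k≥0} p_k z^k, A(z) := E[z^{|𝒯|}], B(z,x) := E[z^{|𝒯|} P(𝒯,x)], and C(z,x,y) := E[z^{|𝒯|} P(𝒯,x) P(𝒯,y)] (all these expectations converge absolutely). Then for all such z, x, y: C(z,x,y) · (1 − x y z Φ′(A(z))) = x y z Φ″(A(z)) B(z,x) B(z,y) + B(z,x) + B(z,y) − A(z). -/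

import Mathlib

inductive OTree : Type where
  | node : List OTree → OTree

namespace OTree

mutual
def positions : OTree → List (List ℕ)
  | .node ts => [] :: posList ts 0

def posList : List OTree → ℕ → List (List ℕ)
  | [], _ => []
  | t :: ts, i => (positions t).map (fun q => i :: q) ++ posList ts (i + 1)
end

/-- number of vertices -/
def size (T : OTree) : ℕ := T.positions.length

/-- number of children of the vertex at position `q` -/
def childCount (T : OTree) (q : List ℕ) : ℕ :=
  (T.positions.filter (fun r => decide (r ≠ [] ∧ r.dropLast = q))).length

def rootDeg (T : OTree) : ℕ := T.childCount []

def profile (T : OTree) (i : ℕ) : ℕ :=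
  (T.positions.filter (fun q => decide (q.length = i))).length

def lcp : List ℕ → List ℕ → ℕ
  | a :: as, b :: bs => if a = b then lcp as bs + 1 else 0
  | _, _ => 0

def pdist (q r : List ℕ) : ℕ := q.length + r.length - 2 * lcp q r

def distProfile (T : OTree) (i : ℕ) : ℕ :=
  (T.positions.map (fun q =>
    (T.positions.filter (fun r => decide (pdist q r = i))).length)).sum

noncomputable def gwWeight (p : ℕ → ℝ) (T : OTree) : ℝ :=
  (T.positions.map (fun q => p (T.childCount q))).prod

noncomputable def gwZ (p : ℕ → ℝ) (n : ℕ) : ℝ :=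
  ∑' T : OTree, if T.size = n then gwWeight p T else 0

noncomputable def gwExp (p : ℕ → ℝ) (n : ℕ) (f : OTree → ℝ) : ℝ :=
  (∑' T : OTree, if T.size = n then gwWeight p T * f T else 0) / gwZ p n

end OTree

open OTree

/-- `P(T,x) = Σ_{v ∈ T} x^{d(v,o)}` -/
noncomputable def Pfun (T : OTree) (x : ℂ) : ℂ :=
  (T.positions.map (fun q => x ^ q.length)).sum

/-- `A(z) = E[z^{|𝒯|}]` -/
noncomputable def Afun (p : ℕ → ℝ) (z : ℂ) : ℂ :=
  ∑' T : OTree, (gwWeight p T : ℂ) * z ^ T.size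

/-- `B(z,x) = E[z^{|𝒯|} P(𝒯,x)]` -/
noncomputable def Bfun (p : ℕ → ℝ) (z x : ℂ) : ℂ :=
  ∑' T : OTree, (gwWeight p T : ℂ) * z ^ T.size * Pfun T x

/-- `C(z,x,y) = E[z^{|𝒯|} P(𝒯,x) P(𝒯,y)]` -/
noncomputable def Cfun (p : ℕ → ℝ) (z x y : ℂ) : ℂ :=
  ∑' T : OTree, (gwWeight p T : ℂ) * z ^ T.size * Pfun T x * Pfun T y

/-- the derivative `Φ′` of the offspring generating function `Φ(u) = Σ_k p_k u^k` -/
noncomputable def PhiD (p : ℕ → ℝ) (u : ℂ) : ℂ :=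
  ∑' k : ℕ, (k : ℂ) * (p k : ℂ) * u ^ (k - 1)

/-- the second derivative `Φ″` of the offspring generating function -/
noncomputable def PhiDD (p : ℕ → ℝ) (u : ℂ) : ℂ :=
  ∑' k : ℕ, (k : ℂ) * ((k : ℂ) - 1) * (p k : ℂ) * u ^ (k - 2)

/-!
Cutting a tree at its root identifies it with a root degree `n` and an `n`-tuple of subtrees;
the weight becomes `p n * ∏ w(subtree)`, the size `1 + ∑ size`, and `P(T,x) = 1 + x ∑ P(subtree,x)`.
Summing over `n`-tuples, the unmarked product gives `A^n`, one marked subtree gives `n B A^(n-1)`,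
and the product of two marking sums gives `n C A^(n-1) + n(n-1) B_x B_y A^(n-2)`. Summing over `n`
against `p n` yields `A = z Φ(A)`, `B = A + x z Φ'(A) B` and
`C = A + x z Φ' B_x + y z Φ' B_y + x y z (Φ' C + Φ'' B_x B_y)`, of which the claim is a linear
combination. Everything converges absolutely because `∑_T P(𝒯 = T) ≤ 1` (by induction on the
size bound, again cutting at the root) and `|P(T,x)| ≤ |T|`.
-/

theorem List.dropLast_cons_eq_nil_iff {a : ℕ} {r : List ℕ} : (a :: r).dropLast = [] ↔ r = [] := by
  cases r <;> simp

theorem List.dropLast_cons_eq_cons_iff {a b : ℕ} {r q : List ℕ} :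
    (a :: r).dropLast = b :: q ↔ a = b ∧ r ≠ [] ∧ r.dropLast = q := by
  cases r <;> simp

namespace OTree

theorem exists_eq_node_ofFn (T : OTree) : ∃ n, ∃ v : Fin n → OTree, T = node (List.ofFn v) := by
  obtain ⟨ts⟩ := T
  exact ⟨_, _, congrArg node (List.ofFn_get ts).symm⟩

theorem posList_ofFn : ∀ {n : ℕ} (v : Fin n → OTree) (i : ℕ),
    posList (List.ofFn v) i =
      (List.ofFn fun j : Fin n => (v j).positions.map (List.cons (i + j))).flatten
  | 0, _, _ => rfl
  | n + 1, v, i => by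
    rw [List.ofFn_succ, List.ofFn_succ, posList, posList_ofFn, List.flatten_cons]
    simp [add_assoc, add_comm 1]

theorem positions_node_ofFn {n : ℕ} (v : Fin n → OTree) :
    (node (List.ofFn v)).positions =
      [] :: (List.ofFn fun j : Fin n => (v j).positions.map (List.cons (j : ℕ))).flatten := by
  simp [positions, posList_ofFn]

theorem size_pos (T : OTree) : 0 < T.size := by
  cases T
  simp [size, positions]

theorem size_node_ofFn {n : ℕ} (v : Fin n → OTree) :
    (node (List.ofFn v)).size = 1 + ∑ j, (v j).size := by
  simp [size, positions_node_ofFn, List.sum_ofFn, add_comm]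

theorem childCount_eq_countP (T : OTree) (q : List ℕ) :
    T.childCount q = T.positions.countP (fun r => r ≠ [] ∧ r.dropLast = q) := by
  rw [childCount, List.countP_eq_length_filter]

theorem countP_positions_eq_nil (T : OTree) : T.positions.countP (· = []) = 1 := by
  obtain ⟨n, v, rfl⟩ := exists_eq_node_ofFn T
  simp [positions_node_ofFn, List.countP_flatten, List.countP_map, Function.comp_def]

theorem childCount_node_ofFn_nil {n : ℕ} (v : Fin n → OTree) :
    (node (List.ofFn v)).childCount [] = n := by
  simp [childCount_eq_countP, positions_node_ofFn, List.countP_flatten, List.countP_map,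
    Function.comp_def, List.dropLast_cons_eq_nil_iff, countP_positions_eq_nil]

theorem childCount_node_ofFn_cons {n : ℕ} (v : Fin n → OTree) (j : Fin n) (q : List ℕ) :
    (node (List.ofFn v)).childCount (j :: q) = (v j).childCount q := by
  rw [childCount_eq_countP, positions_node_ofFn, List.countP_cons_of_neg (by simp),
    List.countP_flatten, List.map_ofFn, List.sum_ofFn,
    Finset.sum_eq_single j (fun i _ hij => by
      simp [List.countP_map, List.dropLast_cons_eq_cons_iff, Fin.val_eq_val, hij]) (by simp)]
  simp [List.countP_map, Function.comp_def, List.dropLast_cons_eq_cons_iff, childCount_eq_countP]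

theorem gwWeight_node_ofFn (p : ℕ → ℝ) {n : ℕ} (v : Fin n → OTree) :
    gwWeight p (node (List.ofFn v)) = p n * ∏ j, gwWeight p (v j) := by
  rw [gwWeight, positions_node_ofFn]
  simp [List.prod_flatten, List.prod_ofFn, childCount_node_ofFn_nil, childCount_node_ofFn_cons,
    Function.comp_def, gwWeight]

theorem gwWeight_nonneg {p : ℕ → ℝ} (hp : ∀ k, 0 ≤ p k) (T : OTree) : 0 ≤ gwWeight p T :=
  List.prod_nonneg fun _ h => by
    obtain ⟨q, -, rfl⟩ := List.mem_map.1 h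
    exact hp _

end OTree

theorem Pfun_node_ofFn {n : ℕ} (v : Fin n → OTree) (x : ℂ) :
    Pfun (node (List.ofFn v)) x = 1 + x * ∑ j, Pfun (v j) x := by
  simp [Pfun, positions_node_ofFn, List.sum_flatten, List.sum_ofFn, Function.comp_def, pow_succ',
    List.sum_map_mul_left, Finset.mul_sum]

theorem norm_Pfun_le {x : ℂ} (hx : ‖x‖ ≤ 1) (T : OTree) : ‖Pfun T x‖ ≤ T.size := by
  rw [Pfun, size]
  induction T.positions with
  | nil => simp
  | cons q l ih =>
    rw [List.map_cons, List.sum_cons, List.length_cons, Nat.cast_succ, add_comm]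
    refine (norm_add_le _ _).trans (add_le_add ih ?_)
    simpa using pow_le_one₀ (norm_nonneg x) hx

section TupleSums

variable {α R : Type*} [NormedCommRing R]

theorem summable_norm_prod_pi {g : α → R} (hg : Summable fun a => ‖g a‖) :
    ∀ n : ℕ, Summable fun v : Fin n → α => ‖∏ i, g (v i)‖
  | 0 => .of_finite
  | n + 1 => (Fin.consEquiv fun _ => α).summable_iff.mp <|
      (hg.mul_norm (summable_norm_prod_pi hg n)).congr fun _ => by simp [Fin.prod_univ_succ]

theorem tsum_prod_pi [CompleteSpace R] {g : α → R} (hg : Summable fun a => ‖g a‖) :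
    ∀ n : ℕ, ∑' v : Fin n → α, ∏ i, g (v i) = (∑' a, g a) ^ n
  | 0 => by simp
  | n + 1 => by
    rw [← (Fin.consEquiv fun _ => α).tsum_eq, pow_succ', ← tsum_prod_pi hg n,
      tsum_mul_tsum_of_summable_norm hg (summable_norm_prod_pi hg n)]
    simp [Fin.prod_univ_succ]

variable {m : ℕ} {F : α → R} {G : (Fin m → α) → R}

theorem summable_norm_mul_removeNth (i : Fin (m + 1)) (hF : Summable fun a => ‖F a‖)
    (hG : Summable fun w => ‖G w‖) :
    Summable fun v : Fin (m + 1) → α => ‖F (v i) * G (i.removeNth v)‖ :=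
  (Fin.insertNthEquiv (fun _ => α) i).summable_iff.mp <|
    (hF.mul_norm hG).congr fun _ => by simp [Fin.insertNthEquiv, Fin.removeNth_insertNth]

theorem tsum_mul_removeNth [CompleteSpace R] (i : Fin (m + 1)) (hF : Summable fun a => ‖F a‖)
    (hG : Summable fun w => ‖G w‖) :
    ∑' v : Fin (m + 1) → α, F (v i) * G (i.removeNth v) = (∑' a, F a) * ∑' w, G w := by
  rw [← (Fin.insertNthEquiv (fun _ => α) i).tsum_eq, tsum_mul_tsum_of_summable_norm hF hG]
  simp [Fin.insertNthEquiv, Fin.removeNth_insertNth]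

theorem summable_norm_sum_mul_removeNth (hF : Summable fun a => ‖F a‖)
    (hG : Summable fun w => ‖G w‖) :
    Summable fun v : Fin (m + 1) → α => ‖∑ i, F (v i) * G (i.removeNth v)‖ :=
  .of_nonneg_of_le (fun _ => norm_nonneg _) (fun _ => norm_sum_le _ _)
    (summable_sum fun i _ => summable_norm_mul_removeNth i hF hG)

theorem tsum_sum_mul_removeNth [CompleteSpace R] (hF : Summable fun a => ‖F a‖)
    (hG : Summable fun w => ‖G w‖) :
    ∑' v : Fin (m + 1) → α, ∑ i, F (v i) * G (i.removeNth v) =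
      (m + 1) * (∑' a, F a) * ∑' w, G w := by
  rw [Summable.tsum_finsetSum fun i _ => (summable_norm_mul_removeNth i hF hG).of_norm]
  simp [tsum_mul_removeNth _ hF hG, mul_assoc]

end TupleSums

section Marked

variable {α R : Type*} [NormedCommRing R] {g h k : α → R}

theorem prod_mul_sum_eq_sum_removeNth {m : ℕ} (v : Fin (m + 1) → α) :
    (∏ l, g (v l)) * ∑ i, h (v i) = ∑ i, g (v i) * h (v i) * ∏ l, g (i.removeNth v l) := by
  rw [Finset.mul_sum]
  refine Finset.sum_congr rfl fun i _ => ?_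
  rw [Fin.prod_univ_succAbove _ i]
  simp only [Fin.removeNth]
  ring

theorem prod_mul_sum_mul_sum_eq_sum_removeNth {m : ℕ} (v : Fin (m + 1) → α) :
    (∏ l, g (v l)) * (∑ i, h (v i)) * ∑ i, k (v i) =
      ∑ i, g (v i) * h (v i) * k (v i) * ∏ l, g (i.removeNth v l) +
        ∑ i, g (v i) * h (v i) *
          ((∏ l, g (i.removeNth v l)) * ∑ l, k (i.removeNth v l)) := by
  rw [prod_mul_sum_eq_sum_removeNth, Finset.sum_mul, ← Finset.sum_add_distrib]
  refine Finset.sum_congr rfl fun i _ => ?_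
  rw [Fin.sum_univ_succAbove _ i]
  simp only [Fin.removeNth]
  ring

theorem summable_norm_prod_mul_sum (hg : Summable fun a => ‖g a‖)
    (hgh : Summable fun a => ‖g a * h a‖) :
    ∀ n : ℕ, Summable fun v : Fin n → α => ‖(∏ i, g (v i)) * ∑ i, h (v i)‖
  | 0 => .of_finite
  | m + 1 => by
    simpa only [prod_mul_sum_eq_sum_removeNth] using
      summable_norm_sum_mul_removeNth hgh (summable_norm_prod_pi hg m)

theorem summable_norm_prod_mul_sum_mul_sum (hg : Summable fun a => ‖g a‖)
    (hgh : Summable fun a => ‖g a * h a‖) (hgk : Summable fun a => ‖g a * k a‖)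
    (hghk : Summable fun a => ‖g a * h a * k a‖) :
    ∀ n : ℕ, Summable fun v : Fin n → α => ‖(∏ i, g (v i)) * (∑ i, h (v i)) * ∑ i, k (v i)‖
  | 0 => .of_finite
  | m + 1 => by
    simp only [prod_mul_sum_mul_sum_eq_sum_removeNth]
    exact ((summable_norm_sum_mul_removeNth hghk (summable_norm_prod_pi hg m)).add
      (summable_norm_sum_mul_removeNth hgh (summable_norm_prod_mul_sum hg hgk m))).of_nonneg_of_le
      (fun _ => norm_nonneg _) fun _ => norm_add_le _ _

variable [CompleteSpace R]

theorem tsum_prod_mul_sum (hg : Summable fun a => ‖g a‖) (hgh : Summable fun a => ‖g a * h a‖) :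
    ∀ n : ℕ, ∑' v : Fin n → α, (∏ i, g (v i)) * ∑ i, h (v i) =
      n * (∑' a, g a * h a) * (∑' a, g a) ^ (n - 1)
  | 0 => by simp
  | m + 1 => by
    simp only [prod_mul_sum_eq_sum_removeNth]
    rw [tsum_sum_mul_removeNth hgh (summable_norm_prod_pi hg m), tsum_prod_pi hg]
    push_cast
    simp

theorem tsum_prod_mul_sum_mul_sum (hg : Summable fun a => ‖g a‖)
    (hgh : Summable fun a => ‖g a * h a‖) (hgk : Summable fun a => ‖g a * k a‖)
    (hghk : Summable fun a => ‖g a * h a * k a‖) :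
    ∀ n : ℕ, ∑' v : Fin n → α, (∏ i, g (v i)) * (∑ i, h (v i)) * ∑ i, k (v i) =
      n * ((∑' a, g a * h a * k a) * (∑' a, g a) ^ (n - 1) +
        (n - 1) * (∑' a, g a * h a) * (∑' a, g a * k a) * (∑' a, g a) ^ (n - 2))
  | 0 => by simp
  | m + 1 => by
    simp only [prod_mul_sum_mul_sum_eq_sum_removeNth]
    rw [Summable.tsum_add
        (summable_norm_sum_mul_removeNth hghk (summable_norm_prod_pi hg m)).of_norm
        (summable_norm_sum_mul_removeNth hgh (summable_norm_prod_mul_sum hg hgk m)).of_norm,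
      tsum_sum_mul_removeNth hghk (summable_norm_prod_pi hg m),
      tsum_sum_mul_removeNth hgh (summable_norm_prod_mul_sum hg hgk m), tsum_prod_pi hg,
      tsum_prod_mul_sum hg hgk]
    push_cast
    simp only [add_sub_cancel_right]
    ring

end Marked

theorem summable_of_tsum_ne_zero {ι : Type*} {f : ι → ℝ} (h : ∑' i, f i ≠ 0) : Summable f := by
  by_contra hf
  exact h (tsum_eq_zero_of_not_summable hf)

namespace OTree

def equivList : OTree ≃ List OTree where
  toFun | node ts => ts
  invFun := node
  left_inv | node _ => rfl
  right_inv _ := rfl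

def equivSigma : OTree ≃ Σ n, Fin n → OTree := equivList.trans List.equivSigmaTuple

theorem hasSum_tsum_node_ofFn {E : Type*} [NormedAddCommGroup E] [CompleteSpace E]
    {F : OTree → E} (hF : Summable F) :
    HasSum (fun n => ∑' v : Fin n → OTree, F (node (List.ofFn v))) (∑' T, F T) := by
  have h := equivSigma.symm.summable_iff.mpr hF
  rw [← equivSigma.symm.tsum_eq]
  exact h.hasSum.sigma fun n => (h.sigma_factor n).hasSum

variable {p : ℕ → ℝ}

theorem summable_and_tsum_le_one_of_node_le (hp : ∀ k, 0 ≤ p k) (hpsum : ∑' k, p k = 1)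
    {f g : OTree → ℝ} (hf0 : ∀ T, 0 ≤ f T) (hf : Summable f) (hf1 : ∑' T, f T ≤ 1)
    (hg0 : ∀ T, 0 ≤ g T)
    (hgf : ∀ (n : ℕ) (v : Fin n → OTree), g (node (List.ofFn v)) ≤ p n * ∏ j, f (v j)) :
    Summable g ∧ ∑' T, g T ≤ 1 := by
  set S := ∑' T, f T
  have hS (n : ℕ) : S ^ n ≤ 1 := pow_le_one₀ (tsum_nonneg hf0) hf1
  let φ : (Σ n, Fin n → OTree) → ℝ := fun σ => p σ.1 * ∏ j, f (σ.2 j)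
  have hφ0 (σ : Σ n, Fin n → OTree) : 0 ≤ φ σ :=
    mul_nonneg (hp _) (Finset.prod_nonneg fun j _ => hf0 _)
  have hfiber (n : ℕ) : HasSum (fun v => φ ⟨n, v⟩) (p n * S ^ n) := by
    have hnorm : Summable fun T => ‖f T‖ := hf.congr fun T => (Real.norm_of_nonneg (hf0 T)).symm
    rw [← tsum_prod_pi hnorm n, ← tsum_mul_left]
    exact ((summable_norm_prod_pi hnorm n).of_norm.mul_left (p n)).hasSum
  have hp_summable : Summable p := summable_of_tsum_ne_zero (hpsum ▸ one_ne_zero)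
  have hφ : Summable φ := (summable_sigma_of_nonneg hφ0).mpr
    ⟨fun n => (hfiber n).summable, hp_summable.of_nonneg_of_le
      (fun n => (hfiber n).tsum_eq ▸ mul_nonneg (hp n) (pow_nonneg (tsum_nonneg hf0) n))
      fun n => (hfiber n).tsum_eq ▸ mul_le_of_le_one_right (hp n) (hS n)⟩
  have hdom (σ : Σ n, Fin n → OTree) : g (equivSigma.symm σ) ≤ φ σ := hgf σ.1 σ.2
  have hg : Summable (g ∘ equivSigma.symm) := hφ.of_nonneg_of_le (fun σ => hg0 _) hdom
  refine ⟨equivSigma.symm.summable_iff.mp hg, ?_⟩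
  calc ∑' T, g T = ∑' σ, g (equivSigma.symm σ) := (equivSigma.symm.tsum_eq g).symm
    _ ≤ ∑' σ, φ σ := hg.tsum_le_tsum hdom hφ
    _ = ∑' n, p n * S ^ n := (hφ.hasSum.sigma hfiber).tsum_eq.symm
    _ ≤ ∑' n, p n := (hφ.hasSum.sigma hfiber).summable.tsum_le_tsum
        (fun n => mul_le_of_le_one_right (hp n) (hS n)) hp_summable
    _ = 1 := hpsum

noncomputable def gwWeightTrunc (p : ℕ → ℝ) (N : ℕ) (T : OTree) : ℝ :=
  if T.size ≤ N then gwWeight p T else 0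

theorem gwWeightTrunc_nonneg (hp : ∀ k, 0 ≤ p k) (N : ℕ) (T : OTree) :
    0 ≤ gwWeightTrunc p N T :=
  ite_nonneg (gwWeight_nonneg hp T) le_rfl

theorem gwWeightTrunc_node_ofFn_le (hp : ∀ k, 0 ≤ p k) (N : ℕ) {n : ℕ} (v : Fin n → OTree) :
    gwWeightTrunc p (N + 1) (node (List.ofFn v)) ≤ p n * ∏ j, gwWeightTrunc p N (v j) := by
  rw [gwWeightTrunc, size_node_ofFn, gwWeight_node_ofFn]
  split_ifs with hsize
  · refine le_of_eq (congrArg _ (Finset.prod_congr rfl fun j _ => (if_pos ?_).symm))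
    have := Finset.single_le_sum (fun i _ => Nat.zero_le (v i).size) (Finset.mem_univ j)
    omega
  · exact mul_nonneg (hp n) (Finset.prod_nonneg fun j _ => gwWeightTrunc_nonneg hp N _)

theorem summable_gwWeightTrunc (hp : ∀ k, 0 ≤ p k) (hpsum : ∑' k, p k = 1) (N : ℕ) :
    Summable (gwWeightTrunc p N) ∧ ∑' T, gwWeightTrunc p N T ≤ 1 := by
  induction N with
  | zero =>
    have h0 : gwWeightTrunc p 0 = 0 := funext fun T => if_neg (not_le.mpr (size_pos T))
    exact ⟨h0 ▸ summable_zero, by simp [h0]⟩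
  | succ N ih =>
    exact summable_and_tsum_le_one_of_node_le hp hpsum (gwWeightTrunc_nonneg hp N) ih.1 ih.2
      (gwWeightTrunc_nonneg hp _) fun _ => gwWeightTrunc_node_ofFn_le hp N

theorem sum_gwWeight_le_one (hp : ∀ k, 0 ≤ p k) (hpsum : ∑' k, p k = 1) (u : Finset OTree) :
    ∑ T ∈ u, gwWeight p T ≤ 1 := by
  obtain ⟨hsum, hle⟩ := summable_gwWeightTrunc hp hpsum (u.sup size)
  calc ∑ T ∈ u, gwWeight p T = ∑ T ∈ u, gwWeightTrunc p (u.sup size) T :=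
        Finset.sum_congr rfl fun T hT => (if_pos (Finset.le_sup hT)).symm
    _ ≤ ∑' T, gwWeightTrunc p (u.sup size) T :=
        hsum.sum_le_tsum u fun T _ => gwWeightTrunc_nonneg hp _ T
    _ ≤ 1 := hle

theorem summable_gwWeight (hp : ∀ k, 0 ≤ p k) (hpsum : ∑' k, p k = 1) : Summable (gwWeight p) :=
  summable_of_sum_le (gwWeight_nonneg hp) (sum_gwWeight_le_one hp hpsum)

theorem tsum_gwWeight_le_one (hp : ∀ k, 0 ≤ p k) (hpsum : ∑' k, p k = 1) : ∑' T, gwWeight p T ≤ 1 :=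
  Real.tsum_le_of_sum_le (gwWeight_nonneg hp) (sum_gwWeight_le_one hp hpsum)

end OTree

open OTree

section GeneratingFunctions

variable {p : ℕ → ℝ} {z x y : ℂ}

noncomputable def gwTerm (p : ℕ → ℝ) (z : ℂ) (T : OTree) : ℂ := (gwWeight p T : ℂ) * z ^ T.size

theorem Afun_eq_tsum_gwTerm : Afun p z = ∑' T, gwTerm p z T := rfl

theorem Bfun_eq_tsum_gwTerm : Bfun p z x = ∑' T, gwTerm p z T * Pfun T x := rfl

theorem Cfun_eq_tsum_gwTerm : Cfun p z x y = ∑' T, gwTerm p z T * Pfun T x * Pfun T y := rfl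

theorem gwTerm_node_ofFn {n : ℕ} (v : Fin n → OTree) :
    gwTerm p z (node (List.ofFn v)) = p n * z * ∏ j, gwTerm p z (v j) := by
  simp only [gwTerm, gwWeight_node_ofFn, size_node_ofFn, pow_add, pow_one,
    ← Finset.prod_pow_eq_pow_sum, Finset.prod_mul_distrib]
  push_cast
  ring

theorem norm_gwTerm (hp : ∀ k, 0 ≤ p k) (T : OTree) :
    ‖gwTerm p z T‖ = gwWeight p T * ‖z‖ ^ T.size := by
  rw [gwTerm, norm_mul, norm_pow, Complex.norm_real, Real.norm_of_nonneg (gwWeight_nonneg hp T)]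

theorem summable_gwWeight_mul_size_pow (hp : ∀ k, 0 ≤ p k) (hpsum : ∑' k, p k = 1) {ρ : ℝ}
    (hρ0 : 0 ≤ ρ) (hρ1 : ρ < 1) (j : ℕ) :
    Summable fun T => gwWeight p T * ((T.size : ℝ) ^ j * ρ ^ T.size) := by
  have hgeom : Summable fun n : ℕ => (n : ℝ) ^ j * ρ ^ n :=
    summable_pow_mul_geometric_of_norm_lt_one j (by rwa [Real.norm_of_nonneg hρ0])
  refine ((summable_gwWeight hp hpsum).mul_right (∑' n : ℕ, (n : ℝ) ^ j * ρ ^ n)).of_nonneg_of_le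
    (fun T => by positivity [gwWeight_nonneg hp T]) fun T => ?_
  exact mul_le_mul_of_nonneg_left (hgeom.le_tsum T.size fun n _ => by positivity)
    (gwWeight_nonneg hp T)

theorem summable_norm_gwTerm (hp : ∀ k, 0 ≤ p k) (hpsum : ∑' k, p k = 1)
    (hz : ‖z‖ < 1) : Summable fun T => ‖gwTerm p z T‖ := by
  simpa [norm_gwTerm hp] using summable_gwWeight_mul_size_pow hp hpsum (norm_nonneg z) hz 0

theorem summable_norm_gwTerm_mul_Pfun (hp : ∀ k, 0 ≤ p k) (hpsum : ∑' k, p k = 1)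
    (hz : ‖z‖ < 1) (hx : ‖x‖ ≤ 1) :
    Summable fun T => ‖gwTerm p z T * Pfun T x‖ := by
  refine (summable_gwWeight_mul_size_pow hp hpsum (norm_nonneg z) hz 1).of_nonneg_of_le
    (fun _ => norm_nonneg _) fun T => ?_
  calc ‖gwTerm p z T * Pfun T x‖ ≤ ‖gwTerm p z T‖ * T.size := by
        rw [norm_mul]; gcongr; exact norm_Pfun_le hx T
    _ = _ := by rw [norm_gwTerm hp]; ring

theorem summable_norm_gwTerm_mul_Pfun_mul_Pfun (hp : ∀ k, 0 ≤ p k) (hpsum : ∑' k, p k = 1)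
    (hz : ‖z‖ < 1) (hx : ‖x‖ ≤ 1) (hy : ‖y‖ ≤ 1) :
    Summable fun T => ‖gwTerm p z T * Pfun T x * Pfun T y‖ := by
  refine (summable_gwWeight_mul_size_pow hp hpsum (norm_nonneg z) hz 2).of_nonneg_of_le
    (fun _ => norm_nonneg _) fun T => ?_
  calc ‖gwTerm p z T * Pfun T x * Pfun T y‖ ≤ ‖gwTerm p z T‖ * T.size * T.size := by
        rw [norm_mul, norm_mul]; gcongr
        exacts [norm_Pfun_le hx T, norm_Pfun_le hy T]
    _ = _ := by rw [norm_gwTerm hp]; ring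

theorem norm_Afun_lt_one (hp : ∀ k, 0 ≤ p k) (hpsum : ∑' k, p k = 1)
    (hz : ‖z‖ < 1) : ‖Afun p z‖ < 1 :=
  calc ‖Afun p z‖ ≤ ∑' T, ‖gwTerm p z T‖ :=
        norm_tsum_le_tsum_norm (summable_norm_gwTerm hp hpsum hz)
    _ ≤ ∑' T, gwWeight p T * ‖z‖ :=
        (summable_norm_gwTerm hp hpsum hz).tsum_le_tsum (fun T => by
          rw [norm_gwTerm hp]
          exact mul_le_mul_of_nonneg_left (pow_le_of_le_one (norm_nonneg z) hz.le (size_pos T).ne')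
            (gwWeight_nonneg hp T)) ((summable_gwWeight hp hpsum).mul_right _)
    _ = (∑' T, gwWeight p T) * ‖z‖ := tsum_mul_right
    _ ≤ 1 * ‖z‖ := by gcongr; exact tsum_gwWeight_le_one hp hpsum
    _ < 1 := by rwa [one_mul]

theorem hasSum_Afun (hp : ∀ k, 0 ≤ p k) (hpsum : ∑' k, p k = 1) (hz : ‖z‖ < 1) :
    HasSum (fun n => (p n : ℂ) * z * Afun p z ^ n) (Afun p z) := by
  have hg := summable_norm_gwTerm hp hpsum hz
  rw [Afun_eq_tsum_gwTerm]
  simpa only [gwTerm_node_ofFn, tsum_mul_left, tsum_prod_pi hg] using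
    hasSum_tsum_node_ofFn hg.of_norm

end GeneratingFunctions

section OffspringSeries

theorem summable_descFactorial_mul_pow_sub {c : ℕ → ℂ} (hc : ∀ k, ‖c k‖ ≤ 1) {u : ℂ}
    (hu : ‖u‖ < 1) (d : ℕ) : Summable fun k => (k.descFactorial d : ℂ) * c k * u ^ (k - d) := by
  refine (summable_nat_add_iff d).mp <| .of_norm_bounded
    (summable_descFactorial_mul_geometric_of_norm_lt_one d (r := ‖u‖) (by simpa using hu))
    fun k => ?_
  rw [Nat.add_sub_cancel, norm_mul, norm_mul, norm_pow, Complex.norm_natCast]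
  exact mul_le_mul_of_nonneg_right (mul_le_of_le_one_right (by positivity) (hc _)) (by positivity)

variable {p : ℕ → ℝ} {u : ℂ}

theorem norm_coeff_le_one (hp : ∀ k, 0 ≤ p k) (hpsum : ∑' k, p k = 1) (k : ℕ) :
    ‖(p k : ℂ)‖ ≤ 1 := by
  rw [Complex.norm_real, Real.norm_of_nonneg (hp k), ← hpsum]
  exact (summable_of_tsum_ne_zero (hpsum ▸ one_ne_zero)).le_tsum k fun j _ => hp j

theorem hasSum_PhiD (hp : ∀ k, 0 ≤ p k) (hpsum : ∑' k, p k = 1) (hu : ‖u‖ < 1) :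
    HasSum (fun k : ℕ => (k : ℂ) * p k * u ^ (k - 1)) (PhiD p u) := by
  rw [PhiD]
  simpa only [Nat.descFactorial_one] using
    (summable_descFactorial_mul_pow_sub (norm_coeff_le_one hp hpsum) hu 1).hasSum

theorem hasSum_PhiDD (hp : ∀ k, 0 ≤ p k) (hpsum : ∑' k, p k = 1) (hu : ‖u‖ < 1) :
    HasSum (fun k : ℕ => (k : ℂ) * ((k : ℂ) - 1) * p k * u ^ (k - 2)) (PhiDD p u) := by
  rw [PhiDD]
  simpa only [Nat.cast_descFactorial_two] using
    (summable_descFactorial_mul_pow_sub (norm_coeff_le_one hp hpsum) hu 2).hasSum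

end OffspringSeries

section Recursions

variable {p : ℕ → ℝ} {z x y : ℂ}

theorem Bfun_eq (hp : ∀ k, 0 ≤ p k) (hpsum : ∑' k, p k = 1) (hz : ‖z‖ < 1) (hx : ‖x‖ ≤ 1) :
    Bfun p z x = Afun p z + x * z * Bfun p z x * PhiD p (Afun p z) := by
  have hg := summable_norm_gwTerm hp hpsum hz
  have hgP := summable_norm_gwTerm_mul_Pfun hp hpsum hz hx
  have hterm (n : ℕ) :
      ∑' v : Fin n → OTree, gwTerm p z (node (List.ofFn v)) * Pfun (node (List.ofFn v)) x =
        p n * z * Afun p z ^ n + x * z * Bfun p z x * (n * p n * Afun p z ^ (n - 1)) := by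
    have hsplit (v : Fin n → OTree) :
        gwTerm p z (node (List.ofFn v)) * Pfun (node (List.ofFn v)) x =
          p n * z * ∏ j, gwTerm p z (v j) +
            p n * z * x * ((∏ j, gwTerm p z (v j)) * ∑ j, Pfun (v j) x) := by
      rw [gwTerm_node_ofFn, Pfun_node_ofFn]; ring
    rw [tsum_congr hsplit, Summable.tsum_add ((summable_norm_prod_pi hg n).of_norm.mul_left _)
        ((summable_norm_prod_mul_sum hg hgP n).of_norm.mul_left _), tsum_mul_left, tsum_mul_left,
      tsum_prod_pi hg, tsum_prod_mul_sum hg hgP, ← Afun_eq_tsum_gwTerm, ← Bfun_eq_tsum_gwTerm]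
    ring
  have hB := hasSum_tsum_node_ofFn hgP.of_norm
  simp only [hterm, ← Bfun_eq_tsum_gwTerm] at hB
  exact hB.unique <| (hasSum_Afun hp hpsum hz).add <|
    (hasSum_PhiD hp hpsum (norm_Afun_lt_one hp hpsum hz)).mul_left _

theorem Cfun_eq (hp : ∀ k, 0 ≤ p k) (hpsum : ∑' k, p k = 1) (hz : ‖z‖ < 1) (hx : ‖x‖ ≤ 1)
    (hy : ‖y‖ ≤ 1) :
    Cfun p z x y = Afun p z + x * z * Bfun p z x * PhiD p (Afun p z) +
      y * z * Bfun p z y * PhiD p (Afun p z) + x * y * z * Cfun p z x y * PhiD p (Afun p z) +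
      x * y * z * Bfun p z x * Bfun p z y * PhiDD p (Afun p z) := by
  have hg := summable_norm_gwTerm hp hpsum hz
  have hgPx := summable_norm_gwTerm_mul_Pfun hp hpsum hz hx
  have hgPy := summable_norm_gwTerm_mul_Pfun hp hpsum hz hy
  have hgPP := summable_norm_gwTerm_mul_Pfun_mul_Pfun hp hpsum hz hx hy
  have hterm (n : ℕ) :
      ∑' v : Fin n → OTree, gwTerm p z (node (List.ofFn v)) * Pfun (node (List.ofFn v)) x *
          Pfun (node (List.ofFn v)) y =
        p n * z * Afun p z ^ n + x * z * Bfun p z x * (n * p n * Afun p z ^ (n - 1)) +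
          y * z * Bfun p z y * (n * p n * Afun p z ^ (n - 1)) +
          x * y * z * Cfun p z x y * (n * p n * Afun p z ^ (n - 1)) +
          x * y * z * Bfun p z x * Bfun p z y * (n * (n - 1) * p n * Afun p z ^ (n - 2)) := by
    have hsplit (v : Fin n → OTree) :
        gwTerm p z (node (List.ofFn v)) * Pfun (node (List.ofFn v)) x *
            Pfun (node (List.ofFn v)) y =
          p n * z * ∏ j, gwTerm p z (v j) +
            p n * z * x * ((∏ j, gwTerm p z (v j)) * ∑ j, Pfun (v j) x) +
            p n * z * y * ((∏ j, gwTerm p z (v j)) * ∑ j, Pfun (v j) y) +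
            p n * z * x * y *
              ((∏ j, gwTerm p z (v j)) * (∑ j, Pfun (v j) x) * ∑ j, Pfun (v j) y) := by
      rw [gwTerm_node_ofFn, Pfun_node_ofFn, Pfun_node_ofFn]; ring
    have S0 := (summable_norm_prod_pi hg n).of_norm.mul_left (p n * z)
    have S1 := (summable_norm_prod_mul_sum hg hgPx n).of_norm.mul_left (p n * z * x)
    have S2 := (summable_norm_prod_mul_sum hg hgPy n).of_norm.mul_left (p n * z * y)
    have S3 := (summable_norm_prod_mul_sum_mul_sum hg hgPx hgPy hgPP n).of_norm.mul_left
      (p n * z * x * y)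
    rw [tsum_congr hsplit, Summable.tsum_add ((S0.add S1).add S2) S3,
      Summable.tsum_add (S0.add S1) S2, Summable.tsum_add S0 S1, tsum_mul_left, tsum_mul_left,
      tsum_mul_left, tsum_mul_left, tsum_prod_pi hg, tsum_prod_mul_sum hg hgPx,
      tsum_prod_mul_sum hg hgPy, tsum_prod_mul_sum_mul_sum hg hgPx hgPy hgPP,
      ← Afun_eq_tsum_gwTerm, ← Bfun_eq_tsum_gwTerm, ← Bfun_eq_tsum_gwTerm, ← Cfun_eq_tsum_gwTerm]
    ring
  have hC := hasSum_tsum_node_ofFn hgPP.of_norm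
  simp only [hterm, ← Cfun_eq_tsum_gwTerm] at hC
  have hA := norm_Afun_lt_one hp hpsum hz
  exact hC.unique <| ((((hasSum_Afun hp hpsum hz).add ((hasSum_PhiD hp hpsum hA).mul_left _)).add
    ((hasSum_PhiD hp hpsum hA).mul_left _)).add ((hasSum_PhiD hp hpsum hA).mul_left _)).add
    ((hasSum_PhiDD hp hpsum hA).mul_left _)

end Recursions

theorem stmt_19 (p : ℕ → ℝ)
    (hp : ∀ k, 0 ≤ p k) (hpsum : ∑' k, p k = 1) (hp1 : p 1 < 1)
    (hpmean : ∑' k : ℕ, (k : ℝ) * p k = 1)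
    (z x y : ℂ) (hz : ‖z‖ < 1) (hx : ‖x‖ ≤ 1) (hy : ‖y‖ ≤ 1) :
    Cfun p z x y * (1 - x * y * z * PhiD p (Afun p z)) =
      x * y * z * PhiDD p (Afun p z) * Bfun p z x * Bfun p z y +
        Bfun p z x + Bfun p z y - Afun p z := by
  linear_combination Cfun_eq hp hpsum hz hx hy - Bfun_eq hp hpsum hz hx - Bfun_eq hp hpsum hz hy
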